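/- (Agreement of the two predictive solutions on the overlap.) Let a > 0, T_s ∈ ℝ, τ > 0, and X_A = X_{1A} < X_{2A} < X_{1B} < X_{2B} = X_B. Let u be a classical solution of the 1-D wave equation with speed a on [X_A, X_B] × [T_s, T_s + τ]. Let p̂₁ be a classical solution on [X_{1A}, X_{1B}] × [T_s, T_s + τ] with p̂₁(x,T_s) = u(x,T_s), ∂p̂₁/∂t(x,T_s) = ∂u/∂t(x,T_s), p̂₁(X_{1A},t) = u(X_{1A},t), and ∂p̂₁/∂x(X_{1B},t) = 0, and let p̂₂ be a classical solution on [X_{2A}, X_{2B}] × [T_s, T_s + τ] with p̂₂(x,T_s) = u(x,T_s), ∂p̂₂/∂t(x,T_s) = ∂u/∂t(x,T_s), p̂₂(X_{2B},t) = u(X_{2B},t), and ∂p̂₂/∂x(X_{2A},t) = 0 (all for the relevant x and t). Then for every x in the overlap [X_{2A}, X_{1B}] and every t ∈ [T_s, T_s + τ] with a·(t − T_s) ≤ min(X_{1B} − x, x − X_{2A}), one has p̂₁(x,t) = u(x,t) = p̂₂(x,t). -/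

import Mathlib

/-- `p` is a classical solution of the 1-D wave equation with speed `a` on
`[c, d] × [T₀, T₁]`: it is twice continuously differentiable on an open
neighbourhood of the rectangle and satisfies
`∂²p/∂t² = a² ∂²p/∂x²` there. -/
def IsWaveSolution (a c d T₀ T₁ : ℝ) (p : ℝ → ℝ → ℝ) : Prop :=
  ∃ U : Set (ℝ × ℝ), IsOpen U ∧ (Set.Icc c d ×ˢ Set.Icc T₀ T₁) ⊆ U ∧
    ContDiffOn ℝ 2 (fun q : ℝ × ℝ => p q.1 q.2) U ∧
    ∀ x ∈ Set.Icc c d, ∀ t ∈ Set.Icc T₀ T₁,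
      deriv (deriv (fun s => p x s)) t = a ^ 2 * deriv (deriv (fun y => p y t)) x

/-!
Within the backward light cone of `(x, t)` only the Cauchy data matter. If `w` is the difference
of two solutions with the same Cauchy data, the Riemann invariants `∂ₜw ± a ∂ₓw` are constant along
the characteristics `dx/dt = ∓a`: differentiating along `(∓a, 1)` gives `∂ₜₜw - a² ∂ₓₓw = 0` once
the mixed partials are identified. They vanish on the initial line, so `∂ₜw = 0` on the vertical
segment below `(x, t)` and `w x t = w x T₀ = 0`. The condition `a (t - T_s) ≤ min (X1B - x) (x - X2A)`
puts that cone inside the overlap, so the boundary conditions of the two sub-domains never enter.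
-/

open Set Topology

section CurveDerivatives

variable {G E : Type*} [NormedAddCommGroup G] [NormedSpace ℝ G]
  [NormedAddCommGroup E] [NormedSpace ℝ E] {W : G → E} {U : Set G} {γ : ℝ → G} {v : G} {s : ℝ}

theorem hasDerivAt_fderiv_comp_apply (hU : IsOpen U) (hW : ContDiffOn ℝ 2 W U)
    (hγ : HasDerivAt γ v s) (hs : γ s ∈ U) (w : G) :
    HasDerivAt (fun σ => fderiv ℝ W (γ σ) w) (fderiv ℝ (fderiv ℝ W) (γ s) v w) s := by
  have hW' : DifferentiableAt ℝ (fderiv ℝ W) (γ s) :=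
    ((hW.contDiffAt (hU.mem_nhds hs)).fderiv_right (m := 1) le_rfl).differentiableAt one_ne_zero
  simpa using (hW'.hasFDerivAt.comp_hasDerivAt s hγ).clm_apply (hasDerivAt_const s w)

theorem deriv_deriv_comp_eq_fderiv_fderiv (hU : IsOpen U) (hW : ContDiffOn ℝ 2 W U)
    (hγ : ∀ σ, HasDerivAt γ v σ) (hs : γ s ∈ U) :
    deriv (deriv fun σ => W (γ σ)) s = fderiv ℝ (fderiv ℝ W) (γ s) v v := by
  have hderiv : deriv (fun σ => W (γ σ)) =ᶠ[𝓝 s] fun σ => fderiv ℝ W (γ σ) v := by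
    filter_upwards [(hγ s).continuousAt.preimage_mem_nhds (hU.mem_nhds hs)] with σ hσ
    exact (((hW.differentiableOn (by norm_num)).differentiableAt (hU.mem_nhds hσ)).hasFDerivAt
      |>.comp_hasDerivAt σ (hγ σ)).deriv
  rw [hderiv.deriv_eq]
  exact (hasDerivAt_fderiv_comp_apply hU hW (hγ s) hs v).deriv

end CurveDerivatives

theorem eq_of_forall_hasDerivAt_zero {E : Type*} [NormedAddCommGroup E] [NormedSpace ℝ E]
    {f : ℝ → E} {a b : ℝ} (hab : a ≤ b) (hf : ∀ x ∈ Icc a b, HasDerivAt f 0 x) : f b = f a :=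
  constant_of_has_deriv_right_zero (fun x hx => (hf x hx).continuousAt.continuousWithinAt)
    (fun x hx => (hf x (Ico_subset_Icc_self hx)).hasDerivWithinAt) b (right_mem_Icc.2 hab)

theorem deriv_deriv_fun_sub {𝕜 F : Type*} [NontriviallyNormedField 𝕜] [NormedAddCommGroup F]
    [NormedSpace 𝕜 F] {f g : 𝕜 → F} {x : 𝕜} (hf : ContDiffAt 𝕜 2 f x) (hg : ContDiffAt 𝕜 2 g x) :
    deriv (deriv fun y => f y - g y) x = deriv (deriv f) x - deriv (deriv g) x := by
  simpa only [iteratedDeriv_eq_iterate, Function.iterate_succ, Function.iterate_zero,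
    Function.comp_apply, Function.id_comp] using iteratedDeriv_fun_sub hf hg

local notation "eₓ" => ((1 : ℝ), (0 : ℝ))
local notation "eₜ" => ((0 : ℝ), (1 : ℝ))

theorem hasDerivAt_const_prodMk (x t : ℝ) : HasDerivAt (fun s : ℝ => (x, s)) eₜ t :=
  (hasDerivAt_const t x).prodMk (hasDerivAt_id t)

theorem hasDerivAt_prodMk_const (x t : ℝ) : HasDerivAt (fun y : ℝ => (y, t)) eₓ x :=
  (hasDerivAt_id x).prodMk (hasDerivAt_const x t)

theorem hasDerivAt_characteristic (x k s σ : ℝ) :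
    HasDerivAt (fun σ => ((x + k * (s - σ), σ) : ℝ × ℝ)) (-k, 1) σ := by
  simpa using
    (((hasDerivAt_id σ).const_sub s).const_mul k |>.const_add x).prodMk (hasDerivAt_id σ)

section Slices

variable {p : ℝ → ℝ → ℝ} {U : Set (ℝ × ℝ)} {x t : ℝ}

theorem HasFDerivAt.hasDerivAt_time_slice {L : ℝ × ℝ →L[ℝ] ℝ}
    (h : HasFDerivAt (fun q : ℝ × ℝ => p q.1 q.2) L (x, t)) :
    HasDerivAt (fun s => p x s) (L eₜ) t :=
  (h.comp_hasDerivAt t (hasDerivAt_const_prodMk x t) :)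

theorem HasFDerivAt.hasDerivAt_space_slice {L : ℝ × ℝ →L[ℝ] ℝ}
    (h : HasFDerivAt (fun q : ℝ × ℝ => p q.1 q.2) L (x, t)) :
    HasDerivAt (fun y => p y t) (L eₓ) x :=
  (h.comp_hasDerivAt x (hasDerivAt_prodMk_const x t) :)

theorem deriv_deriv_time_slice (hU : IsOpen U)
    (hW : ContDiffOn ℝ 2 (fun q : ℝ × ℝ => p q.1 q.2) U) (h : (x, t) ∈ U) :
    deriv (deriv fun s => p x s) t =
      fderiv ℝ (fderiv ℝ fun q : ℝ × ℝ => p q.1 q.2) (x, t) eₜ eₜ :=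
  deriv_deriv_comp_eq_fderiv_fderiv hU hW (hasDerivAt_const_prodMk x) h

theorem deriv_deriv_space_slice (hU : IsOpen U)
    (hW : ContDiffOn ℝ 2 (fun q : ℝ × ℝ => p q.1 q.2) U) (h : (x, t) ∈ U) :
    deriv (deriv fun y => p y t) x =
      fderiv ℝ (fderiv ℝ fun q : ℝ × ℝ => p q.1 q.2) (x, t) eₓ eₓ :=
  deriv_deriv_comp_eq_fderiv_fderiv hU hW (fun y => hasDerivAt_prodMk_const y t) h

end Slices

section Characteristics

variable {W : ℝ × ℝ → ℝ} {U K : Set (ℝ × ℝ)} {a : ℝ}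

theorem riemannInvariant_deriv_eq_zero {B : ℝ × ℝ →L[ℝ] ℝ × ℝ →L[ℝ] ℝ} {k : ℝ}
    (hB : B eₓ eₜ = B eₜ eₓ) (hwave : B eₜ eₜ = a ^ 2 * B eₓ eₓ) (hk : k ^ 2 = a ^ 2) :
    B (-k, 1) eₜ + k * B (-k, 1) eₓ = 0 := by
  have hv : ((-k, 1) : ℝ × ℝ) = eₜ - k • eₓ := by ext <;> simp
  rw [hv, map_sub, map_smul]
  simp only [sub_apply, smul_apply, smul_eq_mul]
  linear_combination hwave - k * hB - B eₓ eₓ * hk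

theorem riemannInvariant_eq_of_characteristic (hU : IsOpen U) (hW : ContDiffOn ℝ 2 W U)
    (hKU : K ⊆ U) (hwave : ∀ q ∈ K, fderiv ℝ (fderiv ℝ W) q eₜ eₜ =
      a ^ 2 * fderiv ℝ (fderiv ℝ W) q eₓ eₓ)
    {x k s T₀ : ℝ} (hk : k ^ 2 = a ^ 2) (hs : T₀ ≤ s)
    (hmem : ∀ σ ∈ Icc T₀ s, (x + k * (s - σ), σ) ∈ K) :
    fderiv ℝ W (x, s) eₜ + k * fderiv ℝ W (x, s) eₓ =
      fderiv ℝ W (x + k * (s - T₀), T₀) eₜ + k * fderiv ℝ W (x + k * (s - T₀), T₀) eₓ := by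
  have hderiv : ∀ σ ∈ Icc T₀ s, HasDerivAt (fun σ => fderiv ℝ W (x + k * (s - σ), σ) eₜ +
      k * fderiv ℝ W (x + k * (s - σ), σ) eₓ) 0 σ := by
    intro σ hσ
    have hσU := hKU (hmem σ hσ)
    have hsymm := (hW.contDiffAt (hU.mem_nhds hσU)).isSymmSndFDerivAt (by simp) eₓ eₜ
    have hγ := hasDerivAt_characteristic x k s σ
    have h := (hasDerivAt_fderiv_comp_apply hU hW hγ hσU eₜ).add
      ((hasDerivAt_fderiv_comp_apply hU hW hγ hσU eₓ).const_mul k)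
    rwa [riemannInvariant_deriv_eq_zero hsymm (hwave _ (hmem σ hσ)) hk] at h
  simpa using eq_of_forall_hasDerivAt_zero hs hderiv

end Characteristics

section ConeOfDependence

variable {W : ℝ × ℝ → ℝ} {U : Set (ℝ × ℝ)} {a c d T₀ T₁ : ℝ}

theorem fderiv_time_eq_zero_of_mem_cone (hU : IsOpen U) (hW : ContDiffOn ℝ 2 W U)
    (hKU : Icc c d ×ˢ Icc T₀ T₁ ⊆ U) (hwave : ∀ q ∈ Icc c d ×ˢ Icc T₀ T₁,
      fderiv ℝ (fderiv ℝ W) q eₜ eₜ = a ^ 2 * fderiv ℝ (fderiv ℝ W) q eₓ eₓ)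
    (ha : 0 ≤ a) (hx₀ : ∀ y ∈ Icc c d, fderiv ℝ W (y, T₀) eₓ = 0)
    (ht₀ : ∀ y ∈ Icc c d, fderiv ℝ W (y, T₀) eₜ = 0)
    {x t : ℝ} (ht : t ∈ Icc T₀ T₁) (hxc : c ≤ x - a * (t - T₀)) (hxd : x + a * (t - T₀) ≤ d) :
    fderiv ℝ W (x, t) eₜ = 0 := by
  have hinv : ∀ k, k = a ∨ k = -a → fderiv ℝ W (x, t) eₜ + k * fderiv ℝ W (x, t) eₓ = 0 := by
    intro k hk
    have hmem : ∀ σ ∈ Icc T₀ t, (x + k * (t - σ), σ) ∈ Icc c d ×ˢ Icc T₀ T₁ := by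
      intro σ hσ
      have hle : a * (t - σ) ≤ a * (t - T₀) := mul_le_mul_of_nonneg_left (by linarith [hσ.1]) ha
      have hnonneg : 0 ≤ a * (t - σ) := mul_nonneg ha (by linarith [hσ.2])
      refine ⟨?_, hσ.1, hσ.2.trans ht.2⟩
      rcases hk with rfl | rfl <;> constructor <;> linarith
    have hbase := (hmem T₀ (left_mem_Icc.2 ht.1)).1
    rw [riemannInvariant_eq_of_characteristic hU hW hKU hwave
      (by rcases hk with rfl | rfl <;> ring) ht.1 hmem, ht₀ _ hbase, hx₀ _ hbase]
    ring
  linarith [hinv a (Or.inl rfl), hinv (-a) (Or.inr rfl)]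

end ConeOfDependence

namespace IsWaveSolution

variable {a c d T₀ T₁ : ℝ} {p u : ℝ → ℝ → ℝ}

theorem mono (hp : IsWaveSolution a c d T₀ T₁ p) {c' d' : ℝ} (hc : c ≤ c') (hd : d' ≤ d) :
    IsWaveSolution a c' d' T₀ T₁ p := by
  obtain ⟨U, hU, hKU, hW, hwave⟩ := hp
  exact ⟨U, hU, (prod_mono (Icc_subset_Icc hc hd) subset_rfl).trans hKU, hW,
    fun x hx => hwave x (Icc_subset_Icc hc hd hx)⟩

theorem contDiffAt_time_slice (hp : IsWaveSolution a c d T₀ T₁ p) {x t : ℝ} (hx : x ∈ Icc c d)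
    (ht : t ∈ Icc T₀ T₁) : ContDiffAt ℝ 2 (fun s => p x s) t := by
  obtain ⟨U, hU, hKU, hW, -⟩ := hp
  exact (hW.contDiffAt (hU.mem_nhds (hKU ⟨hx, ht⟩))).comp t (contDiffAt_const.prodMk contDiffAt_id)

theorem contDiffAt_space_slice (hp : IsWaveSolution a c d T₀ T₁ p) {x t : ℝ} (hx : x ∈ Icc c d)
    (ht : t ∈ Icc T₀ T₁) : ContDiffAt ℝ 2 (fun y => p y t) x := by
  obtain ⟨U, hU, hKU, hW, -⟩ := hp
  exact (hW.contDiffAt (hU.mem_nhds (hKU ⟨hx, ht⟩))).comp x (contDiffAt_id.prodMk contDiffAt_const)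

theorem sub (hp : IsWaveSolution a c d T₀ T₁ p) (hu : IsWaveSolution a c d T₀ T₁ u) :
    IsWaveSolution a c d T₀ T₁ fun x t => p x t - u x t := by
  have ⟨U, hU, hKU, hW, hwave⟩ := hp
  have ⟨V, hV, hKV, hW', hwave'⟩ := hu
  refine ⟨U ∩ V, hU.inter hV, subset_inter hKU hKV,
    (hW.mono inter_subset_left).sub (hW'.mono inter_subset_right), fun x hx t ht => ?_⟩
  rw [deriv_deriv_fun_sub (hp.contDiffAt_time_slice hx ht) (hu.contDiffAt_time_slice hx ht),
    deriv_deriv_fun_sub (hp.contDiffAt_space_slice hx ht) (hu.contDiffAt_space_slice hx ht),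
    hwave x hx t ht, hwave' x hx t ht]
  ring

theorem eq_zero_of_cauchy_data (hp : IsWaveSolution a c d T₀ T₁ p) (ha : 0 ≤ a) (hcd : c < d)
    (h₀ : ∀ y ∈ Icc c d, p y T₀ = 0) (h₀' : ∀ y ∈ Icc c d, deriv (fun s => p y s) T₀ = 0)
    {x t : ℝ} (ht : t ∈ Icc T₀ T₁) (hxc : c ≤ x - a * (t - T₀)) (hxd : x + a * (t - T₀) ≤ d) :
    p x t = 0 := by
  obtain ⟨U, hU, hKU, hW, hwave⟩ := hp
  have hfderiv : ∀ y ∈ Icc c d, ∀ s ∈ Icc T₀ T₁, HasFDerivAt (fun q : ℝ × ℝ => p q.1 q.2)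
      (fderiv ℝ (fun q : ℝ × ℝ => p q.1 q.2) (y, s)) (y, s) :=
    fun y hy s hs => ((hW.differentiableOn (by norm_num)).differentiableAt
      (hU.mem_nhds (hKU ⟨hy, hs⟩))).hasFDerivAt
  have hT₀ : T₀ ∈ Icc T₀ T₁ := left_mem_Icc.2 (ht.1.trans ht.2)
  have hx₀ : ∀ y ∈ Icc c d, fderiv ℝ (fun q : ℝ × ℝ => p q.1 q.2) (y, T₀) eₓ = 0 := fun y hy =>
    (uniqueDiffOn_Icc hcd y hy).eq_deriv (f := fun z => p z T₀) _
      (hfderiv y hy T₀ hT₀).hasDerivAt_space_slice.hasDerivWithinAt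
      (show HasDerivWithinAt (fun z => p z T₀) 0 (Icc c d) y from
        (hasDerivWithinAt_const y _ 0).congr h₀ (h₀ y hy))
  have ht₀ : ∀ y ∈ Icc c d, fderiv ℝ (fun q : ℝ × ℝ => p q.1 q.2) (y, T₀) eₜ = 0 := fun y hy =>
    (hfderiv y hy T₀ hT₀).hasDerivAt_time_slice.deriv ▸ h₀' y hy
  have hwave' : ∀ q ∈ Icc c d ×ˢ Icc T₀ T₁,
      fderiv ℝ (fderiv ℝ fun q : ℝ × ℝ => p q.1 q.2) q eₜ eₜ =
        a ^ 2 * fderiv ℝ (fderiv ℝ fun q : ℝ × ℝ => p q.1 q.2) q eₓ eₓ := by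
    rintro ⟨y, s⟩ ⟨hy, hs⟩
    rw [← deriv_deriv_time_slice hU hW (hKU ⟨hy, hs⟩),
      ← deriv_deriv_space_slice hU hW (hKU ⟨hy, hs⟩), hwave y hy s hs]
  have hx : x ∈ Icc c d := by
    have : 0 ≤ a * (t - T₀) := mul_nonneg ha (sub_nonneg.2 ht.1)
    constructor <;> linarith
  have hvertical : ∀ s ∈ Icc T₀ t, HasDerivAt (fun s => p x s) 0 s := fun s hs => by
    have hs' : s ∈ Icc T₀ T₁ := ⟨hs.1, hs.2.trans ht.2⟩
    have hcone : a * (s - T₀) ≤ a * (t - T₀) := mul_le_mul_of_nonneg_left (by linarith [hs.2]) ha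
    have h := (hfderiv x hx s hs').hasDerivAt_time_slice
    rwa [fderiv_time_eq_zero_of_mem_cone hU hW hKU hwave' ha hx₀ ht₀ (x := x) hs' (by linarith)
      (by linarith)] at h
  rw [eq_of_forall_hasDerivAt_zero ht.1 hvertical, h₀ x hx]

theorem eq_of_cauchy_data (hp : IsWaveSolution a c d T₀ T₁ p) (hu : IsWaveSolution a c d T₀ T₁ u)
    (ha : 0 ≤ a) (hcd : c < d) (h₀ : ∀ y ∈ Icc c d, p y T₀ = u y T₀)
    (h₀' : ∀ y ∈ Icc c d, deriv (fun s => p y s) T₀ = deriv (fun s => u y s) T₀)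
    {x t : ℝ} (ht : t ∈ Icc T₀ T₁) (hxc : c ≤ x - a * (t - T₀)) (hxd : x + a * (t - T₀) ≤ d) :
    p x t = u x t := by
  have hT₀ : T₀ ∈ Icc T₀ T₁ := left_mem_Icc.2 (ht.1.trans ht.2)
  refine sub_eq_zero.1 <| (hp.sub hu).eq_zero_of_cauchy_data ha hcd
    (fun y hy => sub_eq_zero.2 (h₀ y hy)) (fun y hy => ?_) ht hxc hxd
  rw [deriv_fun_sub ((hp.contDiffAt_time_slice hy hT₀).differentiableAt (by norm_num))
    ((hu.contDiffAt_time_slice hy hT₀).differentiableAt (by norm_num)), h₀' y hy, sub_self]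

end IsWaveSolution

theorem predictive_solutions_agree_on_overlap_general
    (a T_s τ X_A X1A X2A X1B X2B X_B : ℝ)
    (ha : 0 < a)
    (hA : X_A = X1A) (h1 : X1A < X2A) (h3 : X1B < X2B)
    (hB : X2B = X_B)
    (u phat₁ phat₂ : ℝ → ℝ → ℝ)
    (hu : IsWaveSolution a X_A X_B T_s (T_s + τ) u)
    (hp₁ : IsWaveSolution a X1A X1B T_s (T_s + τ) phat₁)
    (hp₂ : IsWaveSolution a X2A X2B T_s (T_s + τ) phat₂)
    (hinit₁ : ∀ x ∈ Set.Icc X1A X1B, phat₁ x T_s = u x T_s)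
    (hinit₁' : ∀ x ∈ Set.Icc X1A X1B,
      deriv (fun s => phat₁ x s) T_s = deriv (fun s => u x s) T_s)
    (hinit₂ : ∀ x ∈ Set.Icc X2A X2B, phat₂ x T_s = u x T_s)
    (hinit₂' : ∀ x ∈ Set.Icc X2A X2B,
      deriv (fun s => phat₂ x s) T_s = deriv (fun s => u x s) T_s) :
    ∀ x ∈ Set.Icc X2A X1B, ∀ t ∈ Set.Icc T_s (T_s + τ),
      a * (t - T_s) ≤ min (X1B - x) (x - X2A) →
      phat₁ x t = u x t ∧ u x t = phat₂ x t := by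
  intro x hx t ht hcone
  have hcone₁ := hcone.trans (min_le_left _ _)
  have hcone₂ := hcone.trans (min_le_right _ _)
  subst hA hB
  constructor
  · exact hp₁.eq_of_cauchy_data (hu.mono le_rfl h3.le) ha.le (by linarith [hx.1, hx.2])
      hinit₁ hinit₁' ht (by linarith) (by linarith)
  · exact (hp₂.eq_of_cauchy_data (hu.mono h1.le le_rfl) ha.le (by linarith [hx.1, hx.2])
      hinit₂ hinit₂' ht (by linarith) (by linarith)).symm

/-- Agreement of the two predictive solutions on the overlap: both equal the
true solution at any overlap point whose backward light cone reaches neither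
input boundary. -/
theorem predictive_solutions_agree_on_overlap
    (a T_s τ X_A X1A X2A X1B X2B X_B : ℝ)
    (ha : 0 < a) (hτ : 0 < τ)
    (hA : X_A = X1A) (h1 : X1A < X2A) (h2 : X2A < X1B) (h3 : X1B < X2B)
    (hB : X2B = X_B)
    (u phat₁ phat₂ : ℝ → ℝ → ℝ)
    (hu : IsWaveSolution a X_A X_B T_s (T_s + τ) u)
    (hp₁ : IsWaveSolution a X1A X1B T_s (T_s + τ) phat₁)
    (hp₂ : IsWaveSolution a X2A X2B T_s (T_s + τ) phat₂)
    (hinit₁ : ∀ x ∈ Set.Icc X1A X1B, phat₁ x T_s = u x T_s)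
    (hinit₁' : ∀ x ∈ Set.Icc X1A X1B,
      deriv (fun s => phat₁ x s) T_s = deriv (fun s => u x s) T_s)
    (hDir₁ : ∀ t ∈ Set.Icc T_s (T_s + τ), phat₁ X1A t = u X1A t)
    (hzero₁ : ∀ t ∈ Set.Icc T_s (T_s + τ), deriv (fun y => phat₁ y t) X1B = 0)
    (hinit₂ : ∀ x ∈ Set.Icc X2A X2B, phat₂ x T_s = u x T_s)
    (hinit₂' : ∀ x ∈ Set.Icc X2A X2B,
      deriv (fun s => phat₂ x s) T_s = deriv (fun s => u x s) T_s)
    (hDir₂ : ∀ t ∈ Set.Icc T_s (T_s + τ), phat₂ X2B t = u X2B t)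
    (hzero₂ : ∀ t ∈ Set.Icc T_s (T_s + τ), deriv (fun y => phat₂ y t) X2A = 0) :
    ∀ x ∈ Set.Icc X2A X1B, ∀ t ∈ Set.Icc T_s (T_s + τ),
      a * (t - T_s) ≤ min (X1B - x) (x - X2A) →
      phat₁ x t = u x t ∧ u x t = phat₂ x t :=
  predictive_solutions_agree_on_overlap_general a T_s τ X_A X1A X2A X1B X2B X_B ha hA h1 h3 hB u
    phat₁ phat₂ hu hp₁ hp₂ hinit₁ hinit₁' hinit₂ hinit₂'
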